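/- Let f, g : S → E be strictly increasing functions from a set S of epsilon numbers into the epsilon numbers such that f ≤ g pointwise, and let D = {e ∈ S : f(e) < g(e)}. Then for every ordinal x with Ep(x) ⊆ S and Ep(x) ∩ D ≠ ∅, one has x[f] < x[g]. -/

import Mathlib

open Ordinal

/-- An ordinal is an epsilon number if it is a fixed point of `ω ^ ·`. -/
def IsEpsilon (x : Ordinal.{0}) : Prop := ω ^ x = x

theorem cnf_fst_lt {x : Ordinal.{0}} (h : ¬ ω ^ x = x) {p : Ordinal × Ordinal}
    (hp : p ∈ CNF ω x) : p.1 < x := by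
  have hx : x ≠ 0 := by
    rintro rfl
    simp [Ordinal.CNF.zero_right] at hp
  have h1 : p.1 ≤ Ordinal.log ω x := Ordinal.CNF.fst_le_log hp
  have h2 : Ordinal.log ω x < x := by
    rcases lt_or_eq_of_le (Ordinal.log_le_self ω x) with h' | h'
    · exact h'
    · exfalso
      have hle := Ordinal.opow_log_le_self ω hx
      rw [h'] at hle
      exact h (le_antisymm hle (Ordinal.right_le_opow x one_lt_omega0))
  exact lt_of_le_of_lt h1 h2

open scoped Classical in
/-- The set of epsilon numbers occurring hereditarily in the Cantor normal form of `x`. -/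
noncomputable def Ep (x : Ordinal.{0}) : Set Ordinal.{0} :=
  if h : ω ^ x = x then {x}
  else ⋃ p : {q // q ∈ CNF ω x}, Ep p.1.1
termination_by x
decreasing_by exact cnf_fst_lt h p.2

open scoped Classical in
/-- Simultaneous substitution of the epsilon numbers occurring hereditarily in the
Cantor normal form of `x` by their values under `f`. -/
noncomputable def subst (f : Ordinal.{0} → Ordinal.{0}) (x : Ordinal.{0}) : Ordinal.{0} :=
  if h : ω ^ x = x then f x
  else (((CNF ω x).attach).map (fun p => ω ^ subst f p.1.1 * p.1.2)).sum
termination_by x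
decreasing_by exact cnf_fst_lt h p.2

/-!
For `x ≠ 0` write `x = ω ^ log x * c + r` with `r < ω ^ log x`. Provided `f` sends epsilon
numbers to epsilon numbers, `x[f] = ω ^ (log x)[f] * c + r[f]`, and this holds even when `x` is
itself an epsilon number (then `log x = x`, `c = 1`, `r = 0`). If `f` is strictly increasing, so
is `x ↦ x[f]`, hence `r[f] < ω ^ (log x)[f]` and the displayed sum is again a normal form. Then
`x[f] < x[g]` is a lexicographic comparison: the witness of `f < g` either lies in `log x`, making
the leading exponents differ strictly, or in `r`, where the leading exponents satisfy
`(log x)[f] ≤ (log x)[g]` by monotonicity in the substituted function and the remainders differ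
strictly.
-/

theorem subst_of_isEpsilon {f : Ordinal.{0} → Ordinal.{0}} {x : Ordinal.{0}} (hx : ω ^ x = x) :
    subst f x = f x := by
  rw [subst, dif_pos hx]

theorem subst_of_not_isEpsilon {f : Ordinal.{0} → Ordinal.{0}} {x : Ordinal.{0}}
    (hx : ¬ ω ^ x = x) :
    subst f x = ((CNF ω x).map fun p => ω ^ subst f p.1 * p.2).sum := by
  rw [subst, dif_neg hx]
  exact congrArg List.sum
    (List.attach_map_val (f := fun p : Ordinal × Ordinal => ω ^ subst f p.1 * p.2))

theorem Ep_of_isEpsilon {x : Ordinal.{0}} (hx : ω ^ x = x) : Ep x = {x} := by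
  rw [Ep, dif_pos hx]

theorem CNF_of_isEpsilon {x : Ordinal.{0}} (hx : ω ^ x = x) : CNF ω x = [(x, 1)] := by
  have hx0 : x ≠ 0 := by rintro rfl; simp at hx
  have hlog : log ω x = x := by
    conv_lhs => rw [← hx]
    exact log_opow one_lt_omega0 x
  rw [CNF.ne_zero hx0, hlog, hx, div_self hx0, mod_self, CNF.zero_right]

theorem mem_Ep_iff_exists_mem_CNF {x e : Ordinal.{0}} :
    e ∈ Ep x ↔ ∃ p ∈ CNF ω x, e ∈ Ep p.1 := by
  by_cases hx : ω ^ x = x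
  · simp [CNF_of_isEpsilon hx]
  · rw [Ep, dif_neg hx]
    simp

theorem Ep_zero : Ep 0 = ∅ := by
  ext e
  rw [mem_Ep_iff_exists_mem_CNF, CNF.zero_right]
  simp

theorem subst_zero (f : Ordinal.{0} → Ordinal.{0}) : subst f 0 = 0 := by
  rw [subst_of_not_isEpsilon (by simp), CNF.zero_right, List.map_nil, List.sum_nil]

theorem Ep_eq_union {x : Ordinal.{0}} (hx : x ≠ 0) :
    Ep x = Ep (log ω x) ∪ Ep (x % ω ^ log ω x) := by
  ext e
  rw [Set.mem_union, mem_Ep_iff_exists_mem_CNF, CNF.ne_zero hx]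
  simp only [List.mem_cons, exists_eq_or_imp, ← mem_Ep_iff_exists_mem_CNF]

theorem subst_eq_sum_CNF {S : Set Ordinal.{0}} {f : Ordinal.{0} → Ordinal.{0}}
    (hfE : ∀ e ∈ S, IsEpsilon (f e)) {x : Ordinal.{0}} (hx : Ep x ⊆ S) :
    subst f x = ((CNF ω x).map fun p => ω ^ subst f p.1 * p.2).sum := by
  by_cases hxe : ω ^ x = x
  · have hxS : x ∈ S := hx (by simp [Ep_of_isEpsilon hxe])
    simpa [CNF_of_isEpsilon hxe, subst_of_isEpsilon hxe] using (hfE x hxS).symm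
  · exact subst_of_not_isEpsilon hxe

theorem subst_eq_of_ne_zero {S : Set Ordinal.{0}} {f : Ordinal.{0} → Ordinal.{0}}
    (hfE : ∀ e ∈ S, IsEpsilon (f e)) {x : Ordinal.{0}} (hx0 : x ≠ 0) (hx : Ep x ⊆ S) :
    subst f x = ω ^ subst f (log ω x) * (x / ω ^ log ω x) + subst f (x % ω ^ log ω x) := by
  have hr : Ep (x % ω ^ log ω x) ⊆ S :=
    Set.subset_union_right.trans ((Ep_eq_union hx0).ge.trans hx)
  rw [subst_eq_sum_CNF hfE hx, subst_eq_sum_CNF hfE hr, CNF.ne_zero hx0, List.map_cons,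
    List.sum_cons]

@[elab_as_elim]
theorem cnf_induction {P : Ordinal.{0} → Prop} (x : Ordinal.{0}) (zero : P 0)
    (epsilon : ∀ x, ω ^ x = x → P x)
    (step : ∀ x, x ≠ 0 → P (log ω x) → P (x % ω ^ log ω x) → P x) : P x := by
  induction x using WellFoundedLT.induction with
  | _ x ih =>
    by_cases hxe : ω ^ x = x
    · exact epsilon x hxe
    by_cases hx0 : x = 0
    · exact hx0 ▸ zero
    have hlog : log ω x < x := (log_le_self ω x).lt_of_ne fun h => hxe <|
      (h ▸ opow_log_le_self ω hx0).antisymm (right_le_opow x one_lt_omega0)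
    exact step x hx0 (ih _ hlog) (ih _ (mod_opow_log_lt_self ω hx0))

theorem le_of_mem_Ep {x e : Ordinal.{0}} (he : e ∈ Ep x) : e ≤ x := by
  induction x using cnf_induction with
  | zero => simp [Ep_zero] at he
  | epsilon x hx => rw [Ep_of_isEpsilon hx] at he; exact he.le
  | step x hx0 ihL ihr =>
    rw [Ep_eq_union hx0] at he
    rcases he with he | he
    · exact (ihL he).trans (log_le_self ω x)
    · exact (ihr he).trans (mod_opow_log_lt_self ω hx0).le

theorem Ordinal.opow_le_opow_mul_add (b u : Ordinal) {v : Ordinal} (hv : v ≠ 0) (w : Ordinal) :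
    b ^ u ≤ b ^ u * v + w :=
  (le_mul_left _ (pos_iff_ne_zero.2 hv)).trans le_self_add

theorem Ordinal.div_lt_div_or_mod_lt_mod {a b : Ordinal} (hab : a < b) (z : Ordinal) :
    a / z < b / z ∨ a / z = b / z ∧ a % z < b % z := by
  refine (div_le_left hab.le z).lt_or_eq.imp_right fun hdiv => ⟨hdiv, ?_⟩
  rw [← add_lt_add_iff_left (z * (a / z)), div_add_mod, hdiv, div_add_mod]
  exact hab

theorem subst_lt_of_forall_lt {S : Set Ordinal.{0}} {f : Ordinal.{0} → Ordinal.{0}}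
    (hfE : ∀ e ∈ S, IsEpsilon (f e)) {γ : Ordinal.{0}} (hγ : ω ^ γ = γ) {x : Ordinal.{0}}
    (hx : Ep x ⊆ S) (hlt : ∀ e ∈ Ep x, f e < γ) : subst f x < γ := by
  induction x using cnf_induction with
  | zero => rw [subst_zero, ← hγ]; exact opow_pos γ omega0_pos
  | epsilon x hxe => rw [subst_of_isEpsilon hxe]; exact hlt x (by simp [Ep_of_isEpsilon hxe])
  | step x hx0 ihL ihr =>
    rw [subst_eq_of_ne_zero hfE hx0 hx]
    rw [Ep_eq_union hx0, Set.union_subset_iff] at hx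
    simp only [Ep_eq_union hx0, Set.mem_union, or_imp, forall_and] at hlt
    rw [← hγ]
    exact isPrincipal_add_omega0_opow γ
      (opow_mul_lt_opow (div_opow_log_lt x one_lt_omega0) (ihL hx.1 hlt.1))
      ((ihr hx.2 hlt.2).trans_eq hγ.symm)

theorem subst_mono {S : Set Ordinal.{0}} {f g : Ordinal.{0} → Ordinal.{0}}
    (hfE : ∀ e ∈ S, IsEpsilon (f e)) (hgE : ∀ e ∈ S, IsEpsilon (g e))
    (hle : ∀ e ∈ S, f e ≤ g e) {x : Ordinal.{0}} (hx : Ep x ⊆ S) :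
    subst f x ≤ subst g x := by
  induction x using cnf_induction with
  | zero => rw [subst_zero, subst_zero]
  | epsilon x hxe =>
    rw [subst_of_isEpsilon hxe, subst_of_isEpsilon hxe]
    exact hle x (hx (by simp [Ep_of_isEpsilon hxe]))
  | step x hx0 ihL ihr =>
    rw [subst_eq_of_ne_zero hfE hx0 hx, subst_eq_of_ne_zero hgE hx0 hx]
    rw [Ep_eq_union hx0, Set.union_subset_iff] at hx
    exact add_le_add (mul_le_mul' (opow_le_opow_right omega0_pos (ihL hx.1)) le_rfl) (ihr hx.2)

theorem subst_lt_opow_subst {S : Set Ordinal.{0}} {f : Ordinal.{0} → Ordinal.{0}}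
    (hfE : ∀ e ∈ S, IsEpsilon (f e)) {L : Ordinal.{0}}
    (hL : ∀ a < L, Ep a ⊆ S → subst f a < subst f L) {x : Ordinal.{0}} (hx : Ep x ⊆ S)
    (hxL : x < ω ^ L) : subst f x < ω ^ subst f L := by
  induction x using CNF.rec ω with
  | H0 => rw [subst_zero]; exact opow_pos _ omega0_pos
  | H x hx0 ih =>
    rw [subst_eq_of_ne_zero hfE hx0 hx]
    rw [Ep_eq_union hx0, Set.union_subset_iff] at hx
    exact isPrincipal_add_omega0_opow _
      (opow_mul_lt_opow (div_opow_log_lt x one_lt_omega0)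
        (hL _ ((lt_opow_iff_log_lt one_lt_omega0 hx0).1 hxL) hx.1))
      (ih hx.2 ((mod_opow_log_lt_self ω hx0).trans hxL))

theorem subst_strictMonoOn {S : Set Ordinal.{0}} {f : Ordinal.{0} → Ordinal.{0}}
    (hfE : ∀ e ∈ S, IsEpsilon (f e)) (hf : StrictMonoOn f S) :
    StrictMonoOn (subst f) {x | Ep x ⊆ S} := by
  intro a ha b hb hab
  induction b using cnf_induction generalizing a with
  | zero => simp at hab
  | epsilon b hbe =>
    have hbS : b ∈ S := hb (by simp [Ep_of_isEpsilon hbe])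
    rw [subst_of_isEpsilon hbe]
    exact subst_lt_of_forall_lt hfE (hfE b hbS) ha fun e he =>
      hf (ha he) hbS ((le_of_mem_Ep he).trans_lt hab)
  | step b hb0 ihL ihr =>
    rw [subst_eq_of_ne_zero hfE hb0 hb]
    obtain ⟨hbL, hbr⟩ := Set.union_subset_iff.1 ((Ep_eq_union hb0).ge.trans hb)
    have hrem : ∀ y, Ep y ⊆ S → y < ω ^ log ω b → subst f y < ω ^ subst f (log ω b) :=
      fun y hy => subst_lt_opow_subst hfE (fun a' ha' ha'S => ihL ha'S hbL ha') hy
    have hc0 : b / ω ^ log ω b ≠ 0 := (div_opow_log_pos ω hb0).ne'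
    rcases lt_or_ge a (ω ^ log ω b) with haL | haL
    · exact (hrem a ha haL).trans_le (opow_le_opow_mul_add _ _ hc0 _)
    have ha0 : a ≠ 0 := (opow_pos _ omega0_pos).trans_le haL |>.ne'
    have hlog : log ω a = log ω b := (log_eq_iff one_lt_omega0 ha0 _).2
      ⟨haL, hab.trans (lt_opow_succ_log_self one_lt_omega0 b)⟩
    have har : Ep (a % ω ^ log ω b) ⊆ S :=
      hlog ▸ Set.subset_union_right.trans ((Ep_eq_union ha0).ge.trans ha)
    rw [subst_eq_of_ne_zero hfE ha0 ha, hlog]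
    rcases div_lt_div_or_mod_lt_mod hab (ω ^ log ω b) with hc | ⟨hc, hr⟩
    · have har_lt := hrem _ har (mod_lt a (opow_ne_zero _ omega0_ne_zero))
      exact (opow_mul_add_lt_opow_mul har_lt hc).trans_le le_self_add
    · rw [hc]
      exact (add_lt_add_iff_left _).2 (ihr har hbr hr)

theorem stmt7_general (S : Set Ordinal.{0}) (f g : Ordinal → Ordinal)
    (hfE : ∀ e ∈ S, IsEpsilon (f e)) (hgE : ∀ e ∈ S, IsEpsilon (g e))
    (hf : StrictMonoOn f S)
    (hle : ∀ e ∈ S, f e ≤ g e)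
    (x : Ordinal) (hx : Ep x ⊆ S) (hD : ∃ e ∈ Ep x, e ∈ S ∧ f e < g e) :
    subst f x < subst g x := by
  obtain ⟨e, he, -, hfge⟩ := hD
  induction x using cnf_induction with
  | zero => simp [Ep_zero] at he
  | epsilon x hxe =>
    rw [Ep_of_isEpsilon hxe, Set.mem_singleton_iff] at he
    rwa [subst_of_isEpsilon hxe, subst_of_isEpsilon hxe, ← he]
  | step x hx0 ihL ihr =>
    rw [subst_eq_of_ne_zero hfE hx0 hx, subst_eq_of_ne_zero hgE hx0 hx]
    rw [Ep_eq_union hx0] at hx he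
    rw [Set.union_subset_iff] at hx
    have hlead : subst f (log ω x) < subst g (log ω x) ∨
        subst f (log ω x) = subst g (log ω x) ∧
          subst f (x % ω ^ log ω x) < subst g (x % ω ^ log ω x) := by
      rcases he with he | he
      · exact .inl (ihL hx.1 he)
      · exact (subst_mono hfE hgE hle hx.1).lt_or_eq.imp_right fun h => ⟨h, ihr hx.2 he⟩
    rcases hlead with hlt | ⟨heq, hlt⟩
    · have hrem := subst_lt_opow_subst hfE
        (fun a ha haS => subst_strictMonoOn hfE hf haS hx.1 ha) hx.2
        (mod_lt x (opow_ne_zero _ omega0_ne_zero))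
      exact (opow_mul_add_lt_opow (div_opow_log_lt x one_lt_omega0) hrem hlt).trans_le
        (opow_le_opow_mul_add _ _ (div_opow_log_pos ω hx0).ne' _)
    · rw [heq]
      exact (add_lt_add_iff_left _).2 hlt

theorem stmt7 (S : Set Ordinal.{0}) (f g : Ordinal → Ordinal)
    (hS : ∀ e ∈ S, IsEpsilon e)
    (hfE : ∀ e ∈ S, IsEpsilon (f e)) (hgE : ∀ e ∈ S, IsEpsilon (g e))
    (hf : StrictMonoOn f S) (hg : StrictMonoOn g S)
    (hle : ∀ e ∈ S, f e ≤ g e)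
    (x : Ordinal) (hx : Ep x ⊆ S) (hD : ∃ e ∈ Ep x, e ∈ S ∧ f e < g e) :
    subst f x < subst g x :=
  stmt7_general S f g hfE hgE hf hle x hx hD
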